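/- Let (X, m) be a probability space with a measure-preserving ℤⁿ-action, let U be a measurable set that is a disjoint union U = ⊔_{z ∈ Q_h} T^z B over the cube Q_h of side h (a Rokhlin tower of height h with base B), and let N < h. Define Δ_out = {x ∉ U : T^z x ∈ U for some z ∈ Q_N}. Then m(Δ_out) ≤ m(U) · ((h+N)ⁿ / hⁿ − 1). -/

import Mathlib

open MeasureTheory Filter

/-- The cube `Q_h = {z ∈ ℤⁿ : 1 ≤ z_i ≤ h}`. -/
noncomputable def cube (n h : ℕ) : Finset (Fin n → ℤ) := Finset.Icc 1 (fun _ => (h : ℤ))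

set_option autoImplicit false

/-!
If `x ∉ U` but `T^z x = T^w b ∈ U` with `z ∈ Q_N`, `w ∈ Q_h`, `b ∈ B`, then `x = T^{w-z} b` with
`w - z ∈ [1-N, h]ⁿ \ Q_h`. So the outer boundary is covered by `(h+N)ⁿ - hⁿ` translates of `B`,
each of measure `m B = m U / hⁿ`.
-/

section Action

variable {G X : Type*} [AddGroup G] {T : G → X → X}

theorem image_eq_preimage_neg (hact : ∀ z w x, T (z + w) x = T z (T w x))
    (hid : ∀ x, T 0 x = x) (v : G) (B : Set X) : T v '' B = T (-v) ⁻¹' B :=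
  congrFun (Set.image_eq_preimage_of_inverse (f := T v) (g := T (-v))
    (fun x => by rw [← hact, neg_add_cancel, hid]) (fun x => by rw [← hact, add_neg_cancel, hid])) B

variable [MeasurableSpace X] {m : Measure X} {B : Set X}

theorem measurableSet_image_of_measurePreserving (hmp : ∀ z, MeasurePreserving (T z) m m)
    (hact : ∀ z w x, T (z + w) x = T z (T w x)) (hid : ∀ x, T 0 x = x)
    (hB : MeasurableSet B) (v : G) : MeasurableSet (T v '' B) := by
  rw [image_eq_preimage_neg hact hid]
  exact (hmp (-v)).measurable hB

theorem measureReal_image_of_measurePreserving (hmp : ∀ z, MeasurePreserving (T z) m m)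
    (hact : ∀ z w x, T (z + w) x = T z (T w x)) (hid : ∀ x, T 0 x = x)
    (hB : MeasurableSet B) (v : G) : m.real (T v '' B) = m.real B := by
  rw [image_eq_preimage_neg hact hid]
  exact (hmp (-v)).measureReal_preimage hB.nullMeasurableSet

theorem measureReal_biUnion_image_le (hmp : ∀ z, MeasurePreserving (T z) m m)
    (hact : ∀ z w x, T (z + w) x = T z (T w x)) (hid : ∀ x, T 0 x = x)
    (hB : MeasurableSet B) (F : Finset G) :
    m.real (⋃ v ∈ F, T v '' B) ≤ F.card * m.real B := by
  refine (measureReal_biUnion_finset_le F _).trans_eq ?_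
  simp [measureReal_image_of_measurePreserving hmp hact hid hB]

theorem measureReal_biUnion_image [IsFiniteMeasure m] (hmp : ∀ z, MeasurePreserving (T z) m m)
    (hact : ∀ z w x, T (z + w) x = T z (T w x)) (hid : ∀ x, T 0 x = x)
    (hB : MeasurableSet B) {F : Finset G} (hdisj : (F : Set G).PairwiseDisjoint (T · '' B)) :
    m.real (⋃ v ∈ F, T v '' B) = F.card * m.real B := by
  rw [measureReal_biUnion_finset hdisj
    (fun v _ => measurableSet_image_of_measurePreserving hmp hact hid hB v)]
  simp [measureReal_image_of_measurePreserving hmp hact hid hB]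

end Action

theorem card_Icc_const (n : ℕ) (a b : ℤ) :
    (Finset.Icc (fun _ => a) (fun _ => b) : Finset (Fin n → ℤ)).card = (b + 1 - a).toNat ^ n := by
  simp [Pi.card_Icc, Int.card_Icc]

theorem card_cube (n h : ℕ) : (cube n h).card = h ^ n :=
  (card_Icc_const n 1 h).trans (by simp)

noncomputable def cubeCollar (n h N : ℕ) : Finset (Fin n → ℤ) :=
  Finset.Icc (fun _ => 1 - (N : ℤ)) (fun _ => (h : ℤ)) \ cube n h

theorem card_cubeCollar (n h N : ℕ) :
    ((cubeCollar n h N).card : ℝ) = ((h : ℝ) + N) ^ n - h ^ n := by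
  have hsub : cube n h ⊆ Finset.Icc (fun _ => 1 - (N : ℤ)) (fun _ => (h : ℤ)) :=
    Finset.Icc_subset_Icc (fun _ => by simp) le_rfl
  rw [cubeCollar, Finset.card_sdiff_of_subset hsub, Nat.cast_sub (Finset.card_le_card hsub),
    card_Icc_const, card_cube]
  have : ((h : ℤ) + 1 - (1 - N)).toNat = h + N := by omega
  push_cast [this]
  ring

theorem sub_mem_Icc_of_mem_cube {n h N : ℕ} {w z : Fin n → ℤ} (hw : w ∈ cube n h)
    (hz : z ∈ cube n N) : w - z ∈ Finset.Icc (fun _ => 1 - (N : ℤ)) (fun _ => (h : ℤ)) := by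
  simp only [cube, Finset.mem_Icc, Pi.le_def, Pi.one_apply] at hw hz ⊢
  exact ⟨fun i => by have := hw.1 i; have := hz.2 i; simp only [Pi.sub_apply]; omega,
    fun i => by have := hw.2 i; have := hz.1 i; simp only [Pi.sub_apply]; omega⟩

theorem subset_biUnion_cubeCollar {X : Type*} {n : ℕ} {T : (Fin n → ℤ) → X → X}
    (hact : ∀ z w x, T (z + w) x = T z (T w x)) (hid : ∀ x, T 0 x = x) (h N : ℕ) (B : Set X) :
    {x | x ∉ ⋃ z ∈ cube n h, T z '' B ∧ ∃ z ∈ cube n N, T z x ∈ ⋃ z ∈ cube n h, T z '' B} ⊆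
      ⋃ v ∈ cubeCollar n h N, T v '' B := by
  rintro x ⟨hxU, z, hz, hzx⟩
  obtain ⟨w, hw, b, hb, hwb⟩ : ∃ w ∈ cube n h, ∃ b ∈ B, T w b = T z x := by simpa using hzx
  have hx : T (w - z) b = x := by rw [sub_eq_neg_add, hact, hwb, ← hact, neg_add_cancel, hid]
  have hwz : w - z ∉ cube n h := fun hmem => hxU (Set.mem_biUnion hmem ⟨b, hb, hx⟩)
  exact Set.mem_biUnion (Finset.mem_sdiff.2 ⟨sub_mem_Icc_of_mem_cube hw hz, hwz⟩) ⟨b, hb, hx⟩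

theorem stmt_2_general {X : Type*} [MeasurableSpace X] (m : Measure X) [IsProbabilityMeasure m]
    (n : ℕ) (T : (Fin n → ℤ) → X → X)
    (hmp : ∀ z, MeasurePreserving (T z) m m)
    (hact : ∀ z w x, T (z + w) x = T z (T w x)) (hid : ∀ x, T 0 x = x)
    (h N : ℕ) (hNh : N < h)
    (B : Set X) (hB : MeasurableSet B)
    (hdisj : ∀ z ∈ cube n h, ∀ w ∈ cube n h, z ≠ w → Disjoint (T z '' B) (T w '' B))
    (U : Set X) (hU : U = ⋃ z ∈ cube n h, T z '' B)
    (Δout : Set X) (hΔ : Δout = {x | x ∉ U ∧ ∃ z ∈ cube n N, T z x ∈ U}) :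
    (m Δout).toReal ≤ (m U).toReal * (((h : ℝ) + N) ^ n / (h : ℝ) ^ n - 1) := by
  subst hU hΔ
  simp only [← measureReal_def]
  have hUm : m.real (⋃ z ∈ cube n h, T z '' B) = h ^ n * m.real B := by
    rw [measureReal_biUnion_image hmp hact hid hB fun z hz w hw => hdisj z hz w hw, card_cube,
      Nat.cast_pow]
  have hΔm := (measureReal_mono (subset_biUnion_cubeCollar hact hid h N B)
    (measure_ne_top m _)).trans (measureReal_biUnion_image_le hmp hact hid hB (cubeCollar n h N))
  have hhn : (h : ℝ) ^ n ≠ 0 := pow_ne_zero n (by norm_cast; omega)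
  calc _ ≤ (((h : ℝ) + N) ^ n - h ^ n) * m.real B := by rwa [card_cubeCollar] at hΔm
    _ = _ := by rw [hUm]; field_simp

theorem stmt_2 {X : Type*} [MeasurableSpace X] (m : Measure X) [IsProbabilityMeasure m]
    (n : ℕ) (T : (Fin n → ℤ) → X → X)
    (hmp : ∀ z, MeasurePreserving (T z) m m)
    (hact : ∀ z w x, T (z + w) x = T z (T w x)) (hid : ∀ x, T 0 x = x)
    (h N : ℕ) (hN : 1 ≤ N) (hNh : N < h)
    (B : Set X) (hB : MeasurableSet B)
    (hdisj : ∀ z ∈ cube n h, ∀ w ∈ cube n h, z ≠ w → Disjoint (T z '' B) (T w '' B))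
    (U : Set X) (hU : U = ⋃ z ∈ cube n h, T z '' B)
    (Δout : Set X) (hΔ : Δout = {x | x ∉ U ∧ ∃ z ∈ cube n N, T z x ∈ U}) :
    (m Δout).toReal ≤ (m U).toReal * (((h : ℝ) + N) ^ n / (h : ℝ) ^ n - 1) :=
  stmt_2_general m n T hmp hact hid h N hNh B hB hdisj U hU Δout hΔ
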